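/- arXiv:1604.06323 — 3 statements merged into one kernel-verified Lean document; each statement's English description precedes it below -/
import Mathlib

section
/- Let p ≥ 2 and let T₂ : ℝ² × ℝ² → ℝ be the bilinear form T₂(x, y) = (y₁ + y₂)·x₁ + (y₁ - y₂)·x₂, where the first factor ℝ² carries the ℓ^p norm and the second carries the ℓ^∞ norm. Then the operator norm of T₂ equals 2. -/
/-- The bilinear form `T₂(x, y) = (y₁ + y₂)x₁ + (y₁ - y₂)x₂` on `ℝ² × ℝ²`. -/
def T2 (x y : Fin 2 → ℝ) : ℝ := (y 0 + y 1) * x 0 + (y 0 - y 1) * x 1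

lemma ub (p : ℝ) (hp : 2 ≤ p) (x y : Fin 2 → ℝ)
    (hx : (|x 0| ^ p + |x 1| ^ p) ^ (1 / p) ≤ 1) (hy : max |y 0| |y 1| ≤ 1) :
    |T2 x y| ≤ 2 := by
  have hp0 : (0:ℝ) < p := by linarith
  have hA0 : (0:ℝ) ≤ |x 0| ^ p + |x 1| ^ p := by positivity
  have hA : |x 0| ^ p + |x 1| ^ p ≤ 1 := by
    have h := Real.rpow_le_rpow (by positivity) hx hp0.le
    rwa [← Real.rpow_mul hA0, one_div_mul_cancel hp0.ne',
      Real.rpow_one, Real.one_rpow] at h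
  have hx0 : |x 0| ≤ 1 := by
    by_contra h
    push_neg at h
    have : (1:ℝ) < |x 0| ^ p := by
      have := Real.one_lt_rpow_iff_of_pos (by linarith : (0:ℝ) < |x 0|) (y := p)
      rw [this]; exact Or.inl ⟨h, hp0⟩
    have : (0:ℝ) ≤ |x 1| ^ p := by positivity
    linarith
  have hx1 : |x 1| ≤ 1 := by
    by_contra h
    push_neg at h
    have : (1:ℝ) < |x 1| ^ p := by
      rw [Real.one_lt_rpow_iff_of_pos (by linarith : (0:ℝ) < |x 1|)]
      exact Or.inl ⟨h, hp0⟩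
    have : (0:ℝ) ≤ |x 0| ^ p := by positivity
    linarith
  have hy0 : |y 0| ≤ 1 := le_trans (le_max_left _ _) hy
  have hy1 : |y 1| ≤ 1 := le_trans (le_max_right _ _) hy
  have key : |T2 x y| ≤ |x 0 + x 1| + |x 0 - x 1| := by
    have : T2 x y = y 0 * (x 0 + x 1) + y 1 * (x 0 - x 1) := by unfold T2; ring
    rw [this]
    calc |y 0 * (x 0 + x 1) + y 1 * (x 0 - x 1)|
        ≤ |y 0 * (x 0 + x 1)| + |y 1 * (x 0 - x 1)| := abs_add_le _ _
      _ = |y 0| * |x 0 + x 1| + |y 1| * |x 0 - x 1| := by rw [abs_mul, abs_mul]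
      _ ≤ 1 * |x 0 + x 1| + 1 * |x 0 - x 1| := by
          gcongr
      _ = |x 0 + x 1| + |x 0 - x 1| := by ring
  have : |x 0 + x 1| + |x 0 - x 1| ≤ 2 := by
    rcases abs_cases (x 0 + x 1) with ⟨h1, _⟩ | ⟨h1, _⟩ <;>
    rcases abs_cases (x 0 - x 1) with ⟨h2, _⟩ | ⟨h2, _⟩ <;>
    rcases abs_cases (x 0) with ⟨a1, _⟩ | ⟨a1, _⟩ <;>
    rcases abs_cases (x 1) with ⟨a2, _⟩ | ⟨a2, _⟩ <;>
    linarith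
  linarith

/-- For `p ≥ 2`, the operator norm of `T₂` on `(ℝ², ℓ^p) × (ℝ², ℓ^∞)` equals `2`. -/
theorem stmt2 (p : ℝ) (hp : 2 ≤ p) :
    sSup {t : ℝ | ∃ x y : Fin 2 → ℝ,
      (|x 0| ^ p + |x 1| ^ p) ^ (1 / p) ≤ 1 ∧ max |y 0| |y 1| ≤ 1 ∧ t = |T2 x y|} = 2 := by
  have hp0 : (0:ℝ) < p := by linarith
  have hmem : (2:ℝ) ∈ {t : ℝ | ∃ x y : Fin 2 → ℝ,
      (|x 0| ^ p + |x 1| ^ p) ^ (1 / p) ≤ 1 ∧ max |y 0| |y 1| ≤ 1 ∧ t = |T2 x y|} := by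
    refine ⟨![1, 0], ![1, 1], ?_, ?_, ?_⟩
    · norm_num [Real.one_rpow, Real.zero_rpow hp0.ne']
    · norm_num
    · norm_num [T2]
  apply le_antisymm
  · apply csSup_le ⟨2, hmem⟩
    rintro t ⟨x, y, hx, hy, rfl⟩
    exact ub p hp x y hx hy
  · apply le_csSup ⟨2, ?_⟩ hmem
    rintro t ⟨x, y, hx, hy, rfl⟩
    exact ub p hp x y hx hy
end

section
/- Let p ≥ 2 and let T₂(x, y) = (y₁ + y₂)·x₁ + (y₁ - y₂)·x₂ on (ℝ², ℓ^p) × (ℝ², ℓ^∞). Then (Σ_{j=1}^{2} (Σ_{k=1}^{2} |T₂(e_j, e_k)|²)^{(1/2)·(p/(p-1))})^{(p-1)/p} = 2^{(3p-2)/(2p)} = 2^{1/2 - 1/p} · ‖T₂‖. -/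
/-- For `p ≥ 2`, the mixed `(ℓ_{p/(p-1)}, ℓ_2)` sum of the coefficients of `T₂` equals
`2^{(3p-2)/(2p)} = 2^{1/2 - 1/p}·‖T₂‖`, where `‖T₂‖` is the operator norm of `T₂` on
`(ℝ², ℓ^p) × (ℝ², ℓ^∞)`. -/
theorem stmt3 (p : ℝ) (hp : 2 ≤ p) :
    (∑ j : Fin 2, (∑ k : Fin 2,
        |T2 (Pi.single j 1) (Pi.single k 1)| ^ (2 : ℝ)) ^ ((1 / 2) * (p / (p - 1))))
      ^ ((p - 1) / p) = 2 ^ ((3 * p - 2) / (2 * p)) ∧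
    2 ^ ((3 * p - 2) / (2 * p)) = 2 ^ ((1 : ℝ) / 2 - 1 / p) *
      sSup {t : ℝ | ∃ x y : Fin 2 → ℝ,
        (|x 0| ^ p + |x 1| ^ p) ^ (1 / p) ≤ 1 ∧ max |y 0| |y 1| ≤ 1 ∧ t = |T2 x y|} := by
  have hp0 : (0:ℝ) < p := by linarith
  have hp1 : (1:ℝ) < p := by linarith
  have hpne : p ≠ 0 := ne_of_gt hp0
  have hp1ne : p - 1 ≠ 0 := by intro h; nlinarith
  constructor
  · have h1 : (∑ j : Fin 2, (∑ k : Fin 2,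
        |T2 (Pi.single j 1) (Pi.single k 1)| ^ (2 : ℝ)) ^ ((1 / 2) * (p / (p - 1))))
        = 2 * (2:ℝ) ^ ((1 / 2) * (p / (p - 1))) := by
      rw [Fin.sum_univ_two, Fin.sum_univ_two, Fin.sum_univ_two]
      norm_num [T2, Pi.single_apply]
      ring
    rw [h1]
    have h2 : (2:ℝ) * (2:ℝ) ^ ((1 / 2) * (p / (p - 1)))
        = (2:ℝ) ^ (1 + (1 / 2) * (p / (p - 1))) := by
      rw [Real.rpow_add (by norm_num), Real.rpow_one]
    rw [h2, ← Real.rpow_mul (by norm_num)]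
    congr 1
    field_simp
    ring
  · have hS : sSup {t : ℝ | ∃ x y : Fin 2 → ℝ,
        (|x 0| ^ p + |x 1| ^ p) ^ (1 / p) ≤ 1 ∧ max |y 0| |y 1| ≤ 1 ∧ t = |T2 x y|} = 2 := by
      have hub : ∀ t ∈ {t : ℝ | ∃ x y : Fin 2 → ℝ,
          (|x 0| ^ p + |x 1| ^ p) ^ (1 / p) ≤ 1 ∧ max |y 0| |y 1| ≤ 1 ∧ t = |T2 x y|},
          t ≤ 2 := by
        rintro t ⟨x, y, hx, hy, ht⟩
        -- |x 0| ≤ 1 and |x 1| ≤ 1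
        have hsum : |x 0| ^ p + |x 1| ^ p ≤ 1 := by
          by_contra h
          push_neg at h
          have : (1:ℝ) < (|x 0| ^ p + |x 1| ^ p) ^ (1 / p) :=
            (Real.one_lt_rpow_iff_of_pos (by positivity)).mpr
              (Or.inl ⟨h, by positivity⟩)
          linarith
        have hx0p : |x 0| ^ p ≤ 1 := by
          have : (0:ℝ) ≤ |x 1| ^ p := by positivity
          linarith
        have hx1p : |x 1| ^ p ≤ 1 := by
          have : (0:ℝ) ≤ |x 0| ^ p := by positivity
          linarith
        have hx0 : |x 0| ≤ 1 := by
          by_contra h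
          push_neg at h
          have : (1:ℝ) < |x 0| ^ p :=
            (Real.one_lt_rpow_iff_of_pos (by linarith)).mpr (Or.inl ⟨h, hp0⟩)
          linarith
        have hx1 : |x 1| ≤ 1 := by
          by_contra h
          push_neg at h
          have : (1:ℝ) < |x 1| ^ p :=
            (Real.one_lt_rpow_iff_of_pos (by linarith)).mpr (Or.inl ⟨h, hp0⟩)
          linarith
        have hy0 : |y 0| ≤ 1 := le_trans (le_max_left _ _) hy
        have hy1 : |y 1| ≤ 1 := le_trans (le_max_right _ _) hy
        rw [ht]
        have h1 : |T2 x y| ≤ |(y 0 + y 1) * x 0| + |(y 0 - y 1) * x 1| := abs_add_le _ _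
        rw [abs_mul, abs_mul] at h1
        have h2 : |y 0 + y 1| * |x 0| + |y 0 - y 1| * |x 1| ≤ |y 0 + y 1| + |y 0 - y 1| := by
          have a1 : (0:ℝ) ≤ |y 0 + y 1| := abs_nonneg _
          have a2 : (0:ℝ) ≤ |y 0 - y 1| := abs_nonneg _
          nlinarith [abs_nonneg (x 0), abs_nonneg (x 1)]
        have h3 : |y 0 + y 1| + |y 0 - y 1| ≤ 2 := by
          rcases abs_cases (y 0 + y 1) with ⟨e1, _⟩ | ⟨e1, _⟩ <;>
          rcases abs_cases (y 0 - y 1) with ⟨e2, _⟩ | ⟨e2, _⟩ <;>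
          rcases abs_le.mp hy0 with ⟨b1, b2⟩ <;>
          rcases abs_le.mp hy1 with ⟨c1, c2⟩ <;>
          rw [e1, e2] <;> linarith
        linarith
      have hmem : (2:ℝ) ∈ {t : ℝ | ∃ x y : Fin 2 → ℝ,
          (|x 0| ^ p + |x 1| ^ p) ^ (1 / p) ≤ 1 ∧ max |y 0| |y 1| ≤ 1 ∧ t = |T2 x y|} :=
        ⟨![1, 0], ![1, 1], by
          norm_num [T2, abs_of_nonneg, Real.zero_rpow hpne, Real.one_rpow]⟩
      exact le_antisymm (csSup_le ⟨2, hmem⟩ hub) (le_csSup ⟨2, hub⟩ hmem)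
    rw [hS]
    have h4 : (2:ℝ) ^ ((1:ℝ) / 2 - 1 / p) * 2 = 2 ^ ((1:ℝ) / 2 - 1 / p + 1) := by
      rw [Real.rpow_add (by norm_num), Real.rpow_one]
    rw [h4]
    congr 1
    field_simp
    ring
end

section
/- Let p ≥ 2. For each m ≥ 2 there exists a bounded m-linear form T_m on (ℝ^{2^{m-1}}, ℓ^p) × (ℝ^{2^{m-1}}, ℓ^∞)^{m-1} with operator norm ‖T_m‖ = 2^{m-1}, all of whose coefficients T_m(e_{i_1}, …, e_{i_m}) lie in {-1, 0, 1}, and such that (Σ_{i_1} (Σ_{i_2,…,i_m} |T_m(e_{i_1},…,e_{i_m})|²)^{(1/2)·(p/(p-1))})^{(p-1)/p} = 2^{(1/2 - 1/p)(m-1)} · ‖T_m‖. -/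
/-!
Write the index of the first slot in binary as `b = (b₀, …, b_k)`. Unrolling the recursion for `T_m`
gives `T(x) = ∑_b x₀(b) ∏_r (x_{r+1}(b^r_0) + (-1)^{b_r} x_{r+1}(b^r_1))`, where `b^r_s` has binary
digits `(s, b_{r+1}, …, b_k, 0, …, 0)`. The `r`-th factor depends on `b` only through `b_r, …, b_k`,
and summing its absolute value over `b_r` gives `|A + B| + |A - B| ≤ 2`; summing out `b₀, b₁, …` in
turn bounds `|T(x)|` by `2^{k+1}`, attained at `x₀ = e₀`, `x_{r+1} = 𝟙`. Each coefficient is a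
product of factors in `{-1, 0, 1}`, and for fixed `i₁` the squared coefficients sum to `2^{k+1}`, so
the mixed norm is an explicit power of two.
-/

open Finset

theorem sum_prod_le_pow_of_triangular {α : Type*} [Fintype α] {C : ℝ} (hC : 0 ≤ C) :
    ∀ {n : ℕ} (g : Fin n → (Fin n → α) → ℝ), (∀ r b, 0 ≤ g r b) →
      (∀ r b b', (∀ t, r ≤ t → b t = b' t) → g r b = g r b') →
      (∀ r b, ∑ a, g r (Function.update b r a) ≤ C) →
      ∑ b, ∏ r, g r b ≤ C ^ n
  | 0, _, _, _, _ => by simp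
  | n + 1, g, hg0, hdep, hsum => by
    rcases isEmpty_or_nonempty α with hα | ⟨⟨a₀⟩⟩
    · simp [hC]
    have tail (a : α) (c : Fin n → α) (r : Fin n) :
        g r.succ (Fin.cons a c) = g r.succ (Fin.cons a₀ c) :=
      hdep _ _ _ fun t ht => by
        obtain ⟨u, rfl⟩ := Fin.exists_succ_eq.2 (r.succ_pos.trans_le ht).ne'
        simp
    have ih := sum_prod_le_pow_of_triangular hC (fun r c => g r.succ (Fin.cons a₀ c))
      (fun _ _ => hg0 _ _)
      (fun r c c' h => hdep _ _ _ fun t ht => by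
        cases t using Fin.cases with
        | zero => rfl
        | succ u => simpa using h u (Fin.succ_le_succ_iff.1 ht))
      (fun r c => by simpa only [Fin.cons_update] using hsum r.succ (Fin.cons a₀ c))
    calc ∑ b, ∏ r, g r b
        = ∑ c : Fin n → α, (∑ a, g 0 (Fin.cons a c)) * ∏ r : Fin n, g r.succ (Fin.cons a₀ c) := by
          rw [← (Fin.consEquiv fun _ => α).sum_comp, Fintype.sum_prod_type_right]
          refine sum_congr rfl fun c _ => ?_
          rw [sum_mul]
          refine sum_congr rfl fun a _ => ?_
          rw [Fin.prod_univ_succ]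
          exact congrArg (g 0 (Fin.cons a c) * ·) (prod_congr rfl fun r _ => tail a c r)
      _ ≤ ∑ c : Fin n → α, C * ∏ r : Fin n, g r.succ (Fin.cons a₀ c) := by
          gcongr with c
          · exact prod_nonneg fun _ _ => hg0 _ _
          · simpa only [Fin.update_cons_zero] using hsum 0 (Fin.cons a₀ c)
      _ ≤ C ^ (n + 1) := by
          rw [← mul_sum, pow_succ']
          gcongr

theorem abs_add_add_abs_sub_le {a b c : ℝ} (ha : |a| ≤ c) (hb : |b| ≤ c) :
    |a + b| + |a - b| ≤ 2 * c := by
  rw [abs_le] at ha hb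
  cases abs_cases (a + b) <;> cases abs_cases (a - b) <;> linarith

theorem abs_le_one_of_rpow_sum_le_one {ι : Type*} [Fintype ι] {p : ℝ} (hp : 0 < p) {x : ι → ℝ}
    (hx : (∑ n, |x n| ^ p) ^ (1 / p) ≤ 1) (n : ι) : |x n| ≤ 1 := by
  have hsum : ∑ n, |x n| ^ p ≤ 1 := by
    contrapose! hx
    exact Real.one_lt_rpow hx (by positivity)
  contrapose! hsum
  calc 1 < |x n| ^ p := Real.one_lt_rpow hsum hp
    _ ≤ ∑ n, |x n| ^ p :=
      single_le_sum (f := fun m => |x m| ^ p) (fun m _ => by positivity) (mem_univ n)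

def bitSign (s : Fin 2) : ℝ := if s = 0 then 1 else -1

def slotBits (k : ℕ) (r : Fin (k + 1)) (b : Fin (k + 1) → Fin 2) (s : Fin 2) :
    Fin (k + 1) → Fin 2 :=
  Fin.cons s fun t => if h : (t : ℕ) + 1 + r ≤ k then b ⟨t + 1 + r, by omega⟩ else 0

def slotIndex (k : ℕ) (r : Fin (k + 1)) (b : Fin (k + 1) → Fin 2) (s : Fin 2) : Fin (2 ^ (k + 1)) :=
  finFunctionFinEquiv (slotBits k r b s)

def slotForm (k : ℕ) (r : Fin (k + 1)) (b : Fin (k + 1) → Fin 2) :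
    (Fin (2 ^ (k + 1)) → ℝ) →ₗ[ℝ] ℝ :=
  LinearMap.proj (slotIndex k r b 0) + bitSign (b r) • LinearMap.proj (slotIndex k r b 1)

def extremalForm (k : ℕ) : MultilinearMap ℝ (fun _ : Fin (k + 2) => Fin (2 ^ (k + 1)) → ℝ) ℝ :=
  ∑ b : Fin (k + 1) → Fin 2, (MultilinearMap.mkPiAlgebra ℝ (Fin (k + 2)) ℝ).compLinearMap
    (Fin.cons (LinearMap.proj (finFunctionFinEquiv b)) (slotForm k · b))

section ExtremalForm

variable {k : ℕ}

theorem slotIndex_congr {r : Fin (k + 1)} {b b' : Fin (k + 1) → Fin 2}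
    (h : ∀ t, r < t → b t = b' t) (s : Fin 2) : slotIndex k r b s = slotIndex k r b' s := by
  unfold slotIndex slotBits
  congr 2
  funext t
  split_ifs
  · exact h _ (Fin.mk_lt_mk.2 (by omega))
  · rfl

theorem slotIndex_zero_ne_one (r : Fin (k + 1)) (b : Fin (k + 1) → Fin 2) :
    slotIndex k r b 0 ≠ slotIndex k r b 1 := fun h =>
  zero_ne_one (Fin.cons_left_injective _ (finFunctionFinEquiv.injective h))

theorem slotForm_congr {r : Fin (k + 1)} {b b' : Fin (k + 1) → Fin 2}
    (h : ∀ t, r ≤ t → b t = b' t) : slotForm k r b = slotForm k r b' := by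
  have hidx := slotIndex_congr fun t ht => h t ht.le
  simp only [slotForm, hidx, h r le_rfl]

theorem slotForm_apply (r : Fin (k + 1)) (b : Fin (k + 1) → Fin 2) (y : Fin (2 ^ (k + 1)) → ℝ) :
    slotForm k r b y = y (slotIndex k r b 0) + bitSign (b r) * y (slotIndex k r b 1) := rfl

theorem sum_abs_slotForm_update_le (r : Fin (k + 1)) (b : Fin (k + 1) → Fin 2)
    {y : Fin (2 ^ (k + 1)) → ℝ} (hy : ∀ n, |y n| ≤ 1) :
    ∑ a, |slotForm k r (Function.update b r a) y| ≤ 2 := by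
  have hidx (a : Fin 2) (s : Fin 2) : slotIndex k r (Function.update b r a) s = slotIndex k r b s :=
    slotIndex_congr (fun t ht => Function.update_of_ne ht.ne' _ _) s
  simpa [slotForm_apply, hidx, bitSign, ← sub_eq_add_neg] using
    abs_add_add_abs_sub_le (hy (slotIndex k r b 0)) (hy (slotIndex k r b 1))

theorem extremalForm_apply (x : Fin (k + 2) → Fin (2 ^ (k + 1)) → ℝ) :
    extremalForm k x = ∑ b, x 0 (finFunctionFinEquiv b) * ∏ r, slotForm k r b (x r.succ) := by
  simp [extremalForm, Fin.prod_univ_succ]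

theorem abs_extremalForm_le {x : Fin (k + 2) → Fin (2 ^ (k + 1)) → ℝ} (hx : ∀ i n, |x i n| ≤ 1) :
    |extremalForm k x| ≤ 2 ^ (k + 1) :=
  calc |extremalForm k x|
      ≤ ∑ b, |x 0 (finFunctionFinEquiv b)| * ∏ r, |slotForm k r b (x r.succ)| := by
        rw [extremalForm_apply]
        refine (abs_sum_le_sum_abs _ _).trans_eq (sum_congr rfl fun b _ => ?_)
        rw [abs_mul, abs_prod]
    _ ≤ ∑ b, ∏ r, |slotForm k r b (x r.succ)| := by
        gcongr with b
        exact mul_le_of_le_one_left (prod_nonneg fun _ _ => abs_nonneg _) (hx 0 _)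
    _ ≤ 2 ^ (k + 1) :=
        sum_prod_le_pow_of_triangular zero_le_two _ (fun _ _ => abs_nonneg _)
          (fun _ _ _ h => by rw [slotForm_congr h])
          (fun r b => sum_abs_slotForm_update_le r b (hx r.succ))

theorem extremalForm_cons_single_ones :
    extremalForm k (Fin.cons (Pi.single 0 1) fun _ _ => 1) = 2 ^ (k + 1) := by
  have henc_zero : finFunctionFinEquiv (0 : Fin (k + 1) → Fin 2) = 0 := Fin.ext (by simp)
  rw [extremalForm_apply, sum_eq_single 0]
  · simp [slotForm_apply, bitSign, henc_zero]
    norm_num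
  · intro b _ hb
    rw [Fin.cons_zero, ← henc_zero, Pi.single_apply,
      if_neg (finFunctionFinEquiv.injective.ne hb), zero_mul]
  · simp

theorem extremalForm_single (v : Fin (k + 2) → Fin (2 ^ (k + 1))) :
    extremalForm k (fun i => Pi.single (v i) 1) =
      ∏ r, slotForm k r (finFunctionFinEquiv.symm (v 0)) (Pi.single (v r.succ) 1) := by
  rw [extremalForm_apply, sum_eq_single (finFunctionFinEquiv.symm (v 0))]
  · simp
  · intro b _ hb
    rw [Pi.single_apply, if_neg fun h => hb (finFunctionFinEquiv.eq_symm_apply.2 h), zero_mul]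
  · simp

theorem slotForm_single_mem (r : Fin (k + 1)) (b : Fin (k + 1) → Fin 2) (w : Fin (2 ^ (k + 1))) :
    slotForm k r b (Pi.single w 1) ∈ ({-1, 0, 1} : Set ℝ) := by
  have hne := slotIndex_zero_ne_one r b
  rw [slotForm_apply]
  rcases eq_or_ne w (slotIndex k r b 0) with rfl | h₀
  · simp [hne.symm]
  rcases eq_or_ne w (slotIndex k r b 1) with rfl | h₁
  · unfold bitSign; split_ifs <;> simp [h₀]
  · simp [h₀, h₁]

theorem sq_slotForm_single (r : Fin (k + 1)) (b : Fin (k + 1) → Fin 2) (w : Fin (2 ^ (k + 1))) :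
    slotForm k r b (Pi.single w 1) ^ 2 =
      (Pi.single (slotIndex k r b 0) 1 : Fin (2 ^ (k + 1)) → ℝ) w +
        (Pi.single (slotIndex k r b 1) 1 : Fin (2 ^ (k + 1)) → ℝ) w := by
  have hne := slotIndex_zero_ne_one r b
  rw [slotForm_apply]
  rcases eq_or_ne w (slotIndex k r b 0) with rfl | h₀
  · simp [hne, hne.symm]
  rcases eq_or_ne w (slotIndex k r b 1) with rfl | h₁
  · unfold bitSign; split_ifs <;> simp [h₀]
  · simp [h₀, h₁]

theorem sum_sq_slotForm_single (r : Fin (k + 1)) (b : Fin (k + 1) → Fin 2) :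
    ∑ w, slotForm k r b (Pi.single w 1) ^ 2 = 2 := by
  simp only [sq_slotForm_single, sum_add_distrib, sum_pi_single', mem_univ, if_true]
  norm_num

theorem extremalForm_single_mem (v : Fin (k + 2) → Fin (2 ^ (k + 1))) :
    extremalForm k (fun i => Pi.single (v i) 1) ∈ ({-1, 0, 1} : Set ℝ) := by
  rw [extremalForm_single]
  refine prod_induction _ (· ∈ ({-1, 0, 1} : Set ℝ)) ?_ (by simp)
    fun r _ => slotForm_single_mem _ _ _
  rintro a b (rfl | rfl | rfl) (rfl | rfl | rfl) <;> norm_num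

theorem sum_sq_extremalForm_single_cons (i₁ : Fin (2 ^ (k + 1))) :
    ∑ i : Fin (k + 1) → Fin (2 ^ (k + 1)),
      |extremalForm k (fun j => Pi.single ((Fin.cons i₁ i : Fin (k + 2) → Fin (2 ^ (k + 1))) j) 1)|
        ^ (2 : ℝ) = 2 ^ (k + 1) := by
  simp only [Real.rpow_two, sq_abs, extremalForm_single, Fin.cons_zero, Fin.cons_succ, ← prod_pow]
  rw [← Fintype.prod_sum fun r w => slotForm k r (finFunctionFinEquiv.symm i₁) (Pi.single w 1) ^ 2]
  simp [sum_sq_slotForm_single]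

end ExtremalForm

theorem sum_const_rpow_two_pow {p : ℝ} (hp₀ : p ≠ 0) (hp₁ : p - 1 ≠ 0) (n : ℕ) :
    (∑ _i : Fin (2 ^ n), ((2 : ℝ) ^ n) ^ ((1 / 2) * (p / (p - 1)))) ^ ((p - 1) / p) =
      2 ^ ((1 / 2 - 1 / p) * (n : ℝ)) * 2 ^ n := by
  have h2n : ((2 : ℝ) ^ n) = (2 : ℝ) ^ (n : ℝ) := (Real.rpow_natCast 2 n).symm
  rw [sum_const, card_univ, Fintype.card_fin, nsmul_eq_mul, Nat.cast_pow, Nat.cast_ofNat, h2n,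
    ← Real.rpow_mul zero_le_two, ← Real.rpow_add zero_lt_two, ← Real.rpow_mul zero_le_two,
    ← Real.rpow_add zero_lt_two]
  congr 1
  field_simp
  ring

/-- For each `p ≥ 2` and `m = k+2 ≥ 2` there exists an `m`-linear form `T_m` on
`(ℝ^{2^{m-1}}, ℓ^p) × (ℝ^{2^{m-1}}, ℓ^∞)^{m-1}` with operator norm `2^{m-1}`, all of whose
coefficients lie in `{-1,0,1}`, and whose mixed `(ℓ_{p/(p-1)}, ℓ_2)` coefficient sum equals
`2^{(1/2 - 1/p)(m-1)}·‖T_m‖`. -/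
theorem stmt4 (p : ℝ) (hp : 2 ≤ p) (k : ℕ) :
    ∃ T : MultilinearMap ℝ (fun _ : Fin (k + 2) => (Fin (2 ^ (k + 1)) → ℝ)) ℝ,
      (∀ v : Fin (k + 2) → Fin (2 ^ (k + 1)),
        T (fun j => Pi.single (v j) 1) ∈ ({-1, 0, 1} : Set ℝ)) ∧
      sSup {t : ℝ | ∃ x : Fin (k + 2) → (Fin (2 ^ (k + 1)) → ℝ),
          (∑ n, |x 0 n| ^ p) ^ (1 / p) ≤ 1 ∧
          (∀ i, i ≠ 0 → ∀ n, |x i n| ≤ 1) ∧ t = |T x|} = 2 ^ (k + 1) ∧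
      (∑ i₁ : Fin (2 ^ (k + 1)), (∑ i : Fin (k + 1) → Fin (2 ^ (k + 1)),
          |T (fun j => Pi.single ((Fin.cons i₁ i : Fin (k + 2) → Fin (2 ^ (k + 1))) j) 1)| ^ (2 : ℝ))
            ^ ((1 / 2) * (p / (p - 1)))) ^ ((p - 1) / p)
        = 2 ^ (((1 : ℝ) / 2 - 1 / p) * (k + 1)) * 2 ^ (k + 1) := by
  have hp₀ : 0 < p := by linarith
  refine ⟨extremalForm k, extremalForm_single_mem, IsGreatest.csSup_eq ⟨?_, ?_⟩, ?_⟩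
  · refine ⟨Fin.cons (Pi.single 0 1) fun _ _ => 1, ?_, ?_, ?_⟩
    · rw [Fin.cons_zero, sum_eq_single 0 (fun n _ hn => by simp [hn, Real.zero_rpow hp₀.ne'])
        (by simp)]
      simp
    · intro i hi n
      obtain ⟨r, rfl⟩ := Fin.exists_succ_eq.2 hi
      simp
    · rw [extremalForm_cons_single_ones, abs_of_pos (by positivity)]
  · rintro t ⟨x, hx₀, hx, rfl⟩
    refine abs_extremalForm_le fun i => ?_
    rcases eq_or_ne i 0 with rfl | hi
    · exact abs_le_one_of_rpow_sum_le_one hp₀ hx₀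
    · exact hx i hi
  · simp only [sum_sq_extremalForm_single_cons]
    exact_mod_cast sum_const_rpow_two_pow hp₀.ne' (by linarith) (k + 1)
end
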